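/- Let n ≥ 1. The assignments F and G are mutually inverse on objects: (i) for every multi-sorted topological structure X satisfying (A1)–(A7), G(F(X)) = X, i.e., the sorts, operations, relations and topologies recovered from F(X) coincide with those of X; (ii) for every structure ⟨Y; ≤, g, rank, T⟩ satisfying (B1)–(B6), F(G(Y)) = Y; in particular the relation ≤′ on Y defined from the multi-sorted structure G(Y) (by x ≤′ y iff either x,y ∈ X_k and x ≤ᵏ y for some k ∈ {0,…,n}, or x ∈ X_j, y ∈ X_k and x ≤ʲᵏ y for some 1 ≤ j < k ≤ n) coincides with the original order ≤ of Y, and the recovered map g and rank coincide with the original ones. -/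

import Mathlib

namespace ExpandingBelnap
/-! ### Multi-sorted topological structures in the signature of the alter ego `M̃ₙ`

A multi-sorted topological structure `X = ⟨X₀ ⊔ ⋯ ⊔ Xₙ; {g_k}, {≤ᵏ}, {≤ʲᵏ}, T⟩` is
presented by a single carrier `C` (the disjoint union), a `sort` map `C → Fin (n+1)`
(each sort being clopen, which encodes the disjoint-union topology), a combined
operation `g : C → C` (equal to `g_k` on the sort-`k` part for `k ≥ 1` and to the
identity on the sort-`0` part), and a combined relation `r : C → C → Prop`
(equal to `≤ᵏ` on pairs within sort `k` and to `≤ʲᵏ` on pairs from sort `j` to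
sort `k` for `1 ≤ j < k`, and empty on all other pairs of sorts). -/

/-- `U` is an up-set for the relation `r`. -/
def IsUpset {C : Type} (r : C → C → Prop) (U : Set C) : Prop :=
  ∀ x ∈ U, ∀ y, r x y → y ∈ U

/-- `⟨C; r, T⟩` is a Priestley space: `r` is a partial order and the space is
compact and totally order-disconnected. -/
def IsPriestley (C : Type) [TopologicalSpace C] (r : C → C → Prop) : Prop :=
  (∀ x, r x x) ∧ (∀ x y, r x y → r y x → x = y) ∧
    (∀ x y z, r x y → r y z → r x z) ∧ CompactSpace C ∧
    ∀ x y, ¬ r x y → ∃ U : Set C, IsClopen U ∧ IsUpset r U ∧ x ∈ U ∧ y ∉ U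

/-- `(C, sort, g, r)` presents a multi-sorted topological structure in the signature
of `M̃ₙ`: the sorts are clopen (disjoint-union topology), `g` maps into sort `0` and
restricts to the identity on sort `0`, and the relation only relates pairs within a
sort or from sort `j` to sort `k` where `1 ≤ j < k`. -/
def IsMS {n : ℕ} {C : Type} [TopologicalSpace C]
    (sort : C → Fin (n + 1)) (g : C → C) (r : C → C → Prop) : Prop :=
  (∀ k, IsClopen {x | sort x = k}) ∧
    (∀ x, sort (g x) = 0) ∧
    (∀ x, sort x = 0 → g x = x) ∧
    (∀ x y, r x y → sort x = sort y ∨ (0 < (sort x).val ∧ (sort x).val < (sort y).val))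

/-- (A1): each `g_k : X_k → X₀` is continuous (`k ∈ [1, n]`). -/
def AxA1 {n : ℕ} {C : Type} [TopologicalSpace C]
    (sort : C → Fin (n + 1)) (g : C → C) : Prop :=
  ∀ k : Fin (n + 1), 0 < k.val → Continuous fun x : {x : C // sort x = k} => g x.1

/-- (A2): for `k ∈ [1, n]` and `x, y ∈ X_k`, `x ≤ᵏ y` implies `g_k x = g_k y`. -/
def AxA2 {n : ℕ} {C : Type}
    (sort : C → Fin (n + 1)) (g : C → C) (r : C → C → Prop) : Prop :=
  ∀ x y, sort x = sort y → 0 < (sort x).val → r x y → g x = g y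

/-- (A3): for `1 ≤ j < k`, `x ∈ X_j`, `y ∈ X_k`, `x ≤ʲᵏ y` implies `g_j x = g_k y`. -/
def AxA3 {n : ℕ} {C : Type}
    (sort : C → Fin (n + 1)) (g : C → C) (r : C → C → Prop) : Prop :=
  ∀ x y, 0 < (sort x).val → (sort x).val < (sort y).val → r x y → g x = g y

/-- (A4): for `1 ≤ j < k`, `x, y ∈ X_j`, `u, v ∈ X_k`:
`x ≤ʲ y`, `y ≤ʲᵏ u`, `u ≤ᵏ v` imply `x ≤ʲᵏ v`. -/
def AxA4 {n : ℕ} {C : Type} (sort : C → Fin (n + 1)) (r : C → C → Prop) : Prop :=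
  ∀ x y u v, 0 < (sort x).val → sort x = sort y → (sort y).val < (sort u).val →
    sort u = sort v → r x y → r y u → r u v → r x v

/-- (A5): for `1 ≤ j < k < l`, `x ∈ X_j`, `y ∈ X_k`, `z ∈ X_l`:
`x ≤ʲᵏ y` and `y ≤ᵏˡ z` imply `x ≤ʲˡ z`. -/
def AxA5 {n : ℕ} {C : Type} (sort : C → Fin (n + 1)) (r : C → C → Prop) : Prop :=
  ∀ x y z, 0 < (sort x).val → (sort x).val < (sort y).val →
    (sort y).val < (sort z).val → r x y → r y z → r x z

/-- (A6): each `⟨X_k; ≤ᵏ, T_k⟩` is a Priestley space (`k ∈ [0, n]`). -/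
def AxA6 {n : ℕ} {C : Type} [TopologicalSpace C]
    (sort : C → Fin (n + 1)) (r : C → C → Prop) : Prop :=
  ∀ k : Fin (n + 1), IsPriestley {x : C // sort x = k} fun a b => r a.1 b.1

/-- `U j, …, U k` is a mutually increasing family: each `U l` is a subset of `X_l`,
each `U l` is an up-set of `⟨X_l; ≤ˡ⟩`, and for `max(1,j) ≤ i ≤ l ≤ k`,
`x ∈ U i`, `y ∈ X_l` and `x ≤ⁱˡ y` imply `y ∈ U l`. -/
def MutInc {n : ℕ} {C : Type} (sort : C → Fin (n + 1)) (r : C → C → Prop)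
    (j k : Fin (n + 1)) (U : Fin (n + 1) → Set C) : Prop :=
  (∀ l, j ≤ l → l ≤ k → U l ⊆ {x | sort x = l}) ∧
    ∀ i l, j ≤ i → i ≤ l → l ≤ k → (i = l ∨ 0 < i.val) →
      ∀ x ∈ U i, ∀ y, sort y = l → r x y → y ∈ U l

/-- `U` is a clopen subset of the sort-`l` subspace `⟨X_l; T_l⟩`. -/
def ClopenSort {n : ℕ} {C : Type} [TopologicalSpace C]
    (sort : C → Fin (n + 1)) (l : Fin (n + 1)) (U : Set C) : Prop :=
  IsClopen {z : {x : C // sort x = l} | z.1 ∈ U}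

/-- (A7): for `1 ≤ j < k`, `x ∈ X_j`, `y ∈ X_k` with `x ≰ʲᵏ y`, there is a mutually
increasing family of clopen up-sets `U j, …, U k` with `x ∈ U j` and `y ∉ U k`. -/
def AxA7 {n : ℕ} {C : Type} [TopologicalSpace C]
    (sort : C → Fin (n + 1)) (r : C → C → Prop) : Prop :=
  ∀ j k : Fin (n + 1), 0 < j.val → j < k → ∀ x y, sort x = j → sort y = k → ¬ r x y →
    ∃ U : Fin (n + 1) → Set C, MutInc sort r j k U ∧
      (∀ l, j ≤ l → l ≤ k → ClopenSort sort l (U l)) ∧ x ∈ U j ∧ y ∉ U k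

/-- The conjunction of axioms (A1)–(A7). -/
def AxiomsA {n : ℕ} {C : Type} [TopologicalSpace C]
    (sort : C → Fin (n + 1)) (g : C → C) (r : C → C → Prop) : Prop :=
  AxA1 sort g ∧ AxA2 sort g r ∧ AxA3 sort g r ∧ AxA4 sort r ∧ AxA5 sort r ∧
    AxA6 sort r ∧ AxA7 sort r
/-! ### The conditions (B1)–(B6)

These concern single-sorted structures `⟨Y; ≤, g, rank, T⟩`, where `Y` is a
topological space, `le : Y → Y → Prop`, `g : Y → Y` and `rank : Y → Fin (n+1)`
(here `Fin (n+1)` carries its usual linear order and the discrete topology). -/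

/-- (B1): `⟨Y; ≤, T⟩` is a Priestley space. -/
def CondB1 {Y : Type} [TopologicalSpace Y] (le : Y → Y → Prop) : Prop :=
  IsPriestley Y le

/-- (B2): `g` is a continuous retraction. -/
def CondB2 {Y : Type} [TopologicalSpace Y] (g : Y → Y) : Prop :=
  Continuous g ∧ ∀ x, g (g x) = g x

/-- (B3): `x ≤ y` implies `g x = g y`, for all `x, y ∈ Y`. -/
def CondB3 {Y : Type} (le : Y → Y → Prop) (g : Y → Y) : Prop :=
  ∀ x y, le x y → g x = g y

/-- (B4): `g(Y)` is a union of connected components of the comparability graph of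
`⟨Y; ≤⟩`: it is closed under reachability along comparability. -/
def CondB4 {Y : Type} (le : Y → Y → Prop) (g : Y → Y) : Prop :=
  ∀ x y, x ∈ Set.range g →
    Relation.ReflTransGen (fun a b => le a b ∨ le b a) x y → y ∈ Set.range g

/-- (B5): `rank : Y → [0, n]` is continuous and order-preserving. -/
def CondB5 {n : ℕ} {Y : Type} [TopologicalSpace Y]
    (le : Y → Y → Prop) (rank : Y → Fin (n + 1)) : Prop :=
  Continuous rank ∧ ∀ x y, le x y → rank x ≤ rank y

/-- (B6): `g(Y) = rank⁻¹(0)`. -/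
def CondB6 {n : ℕ} {Y : Type} (g : Y → Y) (rank : Y → Fin (n + 1)) : Prop :=
  Set.range g = {x | rank x = 0}

/-- The combined relation of the multi-sorted structure `G(Y)`: its relations are
`≤ᵏ := ≤ ∩ (X_k × X_k)` for `k ∈ [0, n]` and `≤ʲᵏ := ≤ ∩ (X_j × X_k)` for
`1 ≤ j < k ≤ n`, where `X_k := rank⁻¹(k)`. -/
def GRel {n : ℕ} {Y : Type} (le : Y → Y → Prop) (rank : Y → Fin (n + 1)) :
    Y → Y → Prop := fun x y =>
  le x y ∧ (rank x = rank y ∨ (0 < (rank x).val ∧ (rank x).val < (rank y).val))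

theorem gRel_iff_of_forall {n : ℕ} {Y : Type} {r : Y → Y → Prop} {rank : Y → Fin (n + 1)}
    (h : ∀ x y, r x y → rank x = rank y ∨ (0 < (rank x).val ∧ (rank x).val < (rank y).val))
    (x y : Y) : GRel r rank x y ↔ r x y :=
  ⟨And.left, fun hxy => ⟨hxy, h x y hxy⟩⟩

section CondB

variable {n : ℕ} {Y : Type} {le : Y → Y → Prop} {g : Y → Y} {rank : Y → Fin (n + 1)}

theorem rank_eq_zero_of_le (hB4 : CondB4 le g) (hB6 : CondB6 g rank) {x y : Y}
    (hxy : le x y) (hx : rank x = 0) : rank y = 0 := by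
  have hxg : x ∈ Set.range g := hB6 ▸ hx
  have hyg : y ∈ Set.range g := hB4 x y hxg (.single (Or.inl hxy))
  exact (hB6 ▸ hyg : y ∈ {x | rank x = 0})

theorem rank_eq_or_pos_lt_of_le [TopologicalSpace Y] (hB4 : CondB4 le g) (hB5 : CondB5 le rank)
    (hB6 : CondB6 g rank) {x y : Y} (hxy : le x y) :
    rank x = rank y ∨ (0 < (rank x).val ∧ (rank x).val < (rank y).val) := by
  rcases (hB5.2 x y hxy).eq_or_lt with heq | hlt
  · exact Or.inl heq
  · refine Or.inr ⟨Nat.pos_of_ne_zero fun hx => ?_, hlt⟩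
    have hx0 : rank x = 0 := Fin.ext hx
    exact hlt.ne (hx0.trans (rank_eq_zero_of_le hB4 hB6 hxy hx0).symm)

theorem apply_eq_self_of_rank_eq_zero (hg : ∀ x, g (g x) = g x) (hB6 : CondB6 g rank)
    {x : Y} (hx : rank x = 0) : g x = x := by
  obtain ⟨z, rfl⟩ : x ∈ Set.range g := hB6 ▸ hx
  exact hg z

end CondB

theorem statement8_general (n : ℕ) :
    (∀ (C : Type) [TopologicalSpace C]
        (sort : C → Fin (n + 1)) (g : C → C) (r : C → C → Prop),
        IsMS sort g r → AxiomsA sort g r →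
          ∀ x y, GRel r sort x y ↔ r x y) ∧
      (∀ (Y : Type) [TopologicalSpace Y]
          (le : Y → Y → Prop) (g : Y → Y) (rank : Y → Fin (n + 1)),
          CondB1 le → CondB2 g → CondB3 le g → CondB4 le g →
            CondB5 le rank → CondB6 g rank →
            ((∀ x y, GRel le rank x y ↔ le x y) ∧
              (∀ x, rank x = 0 → g x = x))) := by
  refine ⟨fun C _ sort g r hMS _ => gRel_iff_of_forall hMS.2.2.2, ?_⟩
  intro Y _ le g rank _ hB2 _ hB4 hB5 hB6
  exact ⟨gRel_iff_of_forall fun _ _ => rank_eq_or_pos_lt_of_le hB4 hB5 hB6,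
    fun _ => apply_eq_self_of_rank_eq_zero hB2.2 hB6⟩

theorem statement8 (n : ℕ) (hn : 1 ≤ n) :
    (∀ (C : Type) [TopologicalSpace C]
        (sort : C → Fin (n + 1)) (g : C → C) (r : C → C → Prop),
        IsMS sort g r → AxiomsA sort g r →
          ∀ x y, GRel r sort x y ↔ r x y) ∧
      (∀ (Y : Type) [TopologicalSpace Y]
          (le : Y → Y → Prop) (g : Y → Y) (rank : Y → Fin (n + 1)),
          CondB1 le → CondB2 g → CondB3 le g → CondB4 le g →
            CondB5 le rank → CondB6 g rank →
            ((∀ x y, GRel le rank x y ↔ le x y) ∧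
              (∀ x, rank x = 0 → g x = x))) :=
  statement8_general n

end ExpandingBelnap
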